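/- Let C_n be an optimal configuration, i.e., E(C_n) = E^n_min(Q(C_n)). Then C_n has alternating charge distribution (no atom is bonded to an atom of the same charge), every bond angle θ satisfies 2π/5 ≤ θ ≤ 8π/5, and every atom has at most 4 neighbors, i.e., #N(x_i) ≤ 4 for all i ∈ {1,…,n}. -/

import Mathlib

open scoped BigOperators
open Real

noncomputable section

/-- Points of the plane. -/
abbrev Pt := EuclideanSpace ℝ (Fin 2)

/-- An `n`-particle configuration: positions in the plane together with charges in `{-1, 1}`. -/
structure Config (n : ℕ) where
  x : Fin n → Pt
  q : Fin n → ℤ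
  hq : ∀ i, q i = 1 ∨ q i = -1

/-- The configurational energy
`E(C) = (1/2) Σ_{i≠j, q_i=q_j} V_r(|x_i-x_j|) + (1/2) Σ_{i≠j, q_i≠q_j} V_a(|x_i-x_j|)`. -/
def energy (Va Vr : ℝ → EReal) {n : ℕ} (C : Config n) : EReal :=
  ((1/2 : ℝ) : EReal) * (∑ i : Fin n, ∑ j : Fin n,
      if i ≠ j ∧ C.q i = C.q j then Vr (dist (C.x i) (C.x j)) else 0)
  + ((1/2 : ℝ) : EReal) * (∑ i : Fin n, ∑ j : Fin n,
      if i ≠ j ∧ C.q i ≠ C.q j then Va (dist (C.x i) (C.x j)) else 0)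

/-- Slope of (the real part of) `V` between `a` and `r`. -/
def slope' (V : ℝ → EReal) (a r : ℝ) : ℝ := ((V r).toReal - (V a).toReal) / (r - a)

/-- Assumptions [i]-[viii] on the attractive-repulsive potential `Va` and the repulsive
potential `Vr`, with reference parameter `r₀ ∈ [1, (2 sin(π/7))⁻¹)`.  The left derivative of
`Vr` at `√2` is encoded as the supremum of slopes from the left, and the right derivative
of `Vr` at `1` as the infimum of slopes from the right (`Vr` is convex and real-valued
on `[1,∞)`, so these coincide with the one-sided derivatives). -/
structure PotentialAssumptions (r₀ : ℝ) (Va Vr : ℝ → EReal) : Prop where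
  r₀_lb : 1 ≤ r₀
  r₀_ub : r₀ < (2 * Real.sin (Real.pi / 7))⁻¹
  va_inf : ∀ r : ℝ, r < 1 → Va r = ⊤
  va_one : Va 1 = ((-1 : ℝ) : EReal)
  va_gt : ∀ r : ℝ, r ≠ 1 → ((-1 : ℝ) : EReal) < Va r
  va_nonpos : ∀ r : ℝ, 1 ≤ r → Va r ≤ 0
  va_zero : ∀ r : ℝ, r₀ < r → Va r = 0
  vr_inf : ∀ r : ℝ, r < 1 → Vr r = ⊤
  vr_nonneg : ∀ r : ℝ, 1 ≤ r → 0 ≤ Vr r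
  vr_fin : ∀ r : ℝ, 1 ≤ r → Vr r < ⊤
  vr_antitone : ∀ r s : ℝ, 1 ≤ r → r ≤ s → Vr s ≤ Vr r
  vr_convex : ConvexOn ℝ (Set.Ici (1 : ℝ)) (fun r => (Vr r).toReal)
  vr_quant : ((6 : ℝ) : EReal) < Vr (2 * r₀ * Real.sin (Real.pi / 5))
  vr_zero_iff : ∀ r : ℝ, Vr r = 0 ↔ Real.sqrt 2 ≤ r
  slope_left : sSup (slope' Vr (Real.sqrt 2) '' Set.Ico 1 (Real.sqrt 2))
      < -16 / (Real.sqrt 2 * Real.pi)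
  slope_right : ∀ r : ℝ, 1 < r → r ≤ r₀ →
      -(1/2) * sInf (slope' Vr 1 '' Set.Ioi (1 : ℝ)) < slope' Va 1 r

/-- The net charge `Q(C) = Σ_i q_i`. -/
def netCharge {n : ℕ} (C : Config n) : ℤ := ∑ i : Fin n, C.q i

/-- The bond graph: atoms are bonded iff `0 < |x_i - x_j| ≤ r₀`. -/
def bondGraph (r₀ : ℝ) {n : ℕ} (C : Config n) : SimpleGraph (Fin n) where
  Adj i j := C.x i ≠ C.x j ∧ dist (C.x i) (C.x j) ≤ r₀
  symm := ⟨fun i j h => ⟨h.1.symm, by rw [dist_comm]; exact h.2⟩⟩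
  loopless := ⟨fun i h => h.1 rfl⟩

/-- The number of bonds. -/
def numBonds (r₀ : ℝ) {n : ℕ} (C : Config n) : ℕ := (bondGraph r₀ C).edgeSet.ncard

/-- A ground state minimizes the energy among all `n`-particle configurations. -/
def IsGroundState (Va Vr : ℝ → EReal) {n : ℕ} (C : Config n) : Prop :=
  ∀ C' : Config n, energy Va Vr C ≤ energy Va Vr C'

/-- Alternating charge distribution: bonded atoms have opposite charges. -/
def AlternatingCharges (r₀ : ℝ) {n : ℕ} (C : Config n) : Prop :=
  ∀ i j : Fin n, (bondGraph r₀ C).Adj i j → C.q i ≠ C.q j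

/-- A bond is acyclic if it lies on no simple cycle of the graph. -/
def IsAcyclicBond {n : ℕ} (G : SimpleGraph (Fin n)) (e : Sym2 (Fin n)) : Prop :=
  e ∈ G.edgeSet ∧ ∀ (u : Fin n) (c : G.Walk u u), c.IsCycle → e ∉ c.edges

/-- `v` lies on a simple cycle of `G` whose edge set is `S`. -/
def LiesOnCycleWithEdges {n : ℕ} (G : SimpleGraph (Fin n)) (v : Fin n)
    (S : Set (Sym2 (Fin n))) : Prop :=
  ∃ (u : Fin n) (c : G.Walk u u), c.IsCycle ∧ v ∈ c.support ∧ S = {e | e ∈ c.edges}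

/-- A bridge: an acyclic bond contained in a simple path connecting two vertices lying
in two distinct cycles. -/
def IsBridgeBond {n : ℕ} (G : SimpleGraph (Fin n)) (e : Sym2 (Fin n)) : Prop :=
  IsAcyclicBond G e ∧ ∃ (u v : Fin n) (p : G.Walk u v) (S₁ S₂ : Set (Sym2 (Fin n))),
    p.IsPath ∧ e ∈ p.edges ∧ LiesOnCycleWithEdges G u S₁ ∧ LiesOnCycleWithEdges G v S₂ ∧
    S₁ ≠ S₂

/-- A flag: an acyclic bond which is not a bridge. -/
def IsFlagBond {n : ℕ} (G : SimpleGraph (Fin n)) (e : Sym2 (Fin n)) : Prop :=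
  IsAcyclicBond G e ∧ ¬ IsBridgeBond G e

/-- The square lattice `ℤ² ⊂ ℝ²`. -/
def squareLattice : Set Pt := {p | (∃ a : ℤ, p 0 = (a : ℝ)) ∧ (∃ b : ℤ, p 1 = (b : ℝ))}

/-- The set of attainable net charges `Q_net(n) = (2ℤ + n mod 2) ∩ [-n, n]`. -/
def Qnet (n : ℕ) : Set ℤ := {q | |q| ≤ (n : ℤ) ∧ q % 2 = (n : ℤ) % 2}

/-- The minimal energy among `n`-particle configurations with net charge `qnet`. -/
def Emin (Va Vr : ℝ → EReal) (n : ℕ) (qnet : ℤ) : EReal :=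
  sInf ((fun C : Config n => energy Va Vr C) '' {C : Config n | netCharge C = qnet})

/-- The saturation net charge
`q_sat^n = min {q ∈ Q_net(n) ∩ [0,n] : E^n_min(q) = -2n + 2q}`. -/
def qsat (Va Vr : ℝ → EReal) (n : ℕ) : ℤ :=
  sInf {qnet : ℤ | qnet ∈ Qnet n ∧ 0 ≤ qnet ∧
    Emin Va Vr n qnet = (((-2) * (n : ℝ) + 2 * (qnet : ℝ) : ℝ) : EReal)}

/-- A configuration is optimal (for its own net charge) if it attains `E^n_min(Q(C))`. -/
def IsOptimal (Va Vr : ℝ → EReal) {n : ℕ} (C : Config n) : Prop :=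
  energy Va Vr C = Emin Va Vr n (netCharge C)

/-- The function `φ` characterizing the saturation net charge. -/
def phi (n : ℕ) : ℤ :=
  if n = 0 then 0
  else if n = 1 then 1
  else if n % 2 = 1 then 2 * ⌊(-1/2 : ℝ) + (1/2) * Real.sqrt (2 * (n : ℝ) - 5)⌋ + 3
  else 2 * ⌊(1/2 : ℝ) * Real.sqrt (2 * (n : ℝ) - 4)⌋ + 2

/-- The neighborhood `N(x_i) = (X_n \ {x_i}) ∩ {|x - x_i| ≤ r₀}`. -/
def nbhd (r₀ : ℝ) {n : ℕ} (C : Config n) (i : Fin n) : Set Pt :=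
  {y | (∃ j : Fin n, C.x j = y) ∧ y ≠ C.x i ∧ dist y (C.x i) ≤ r₀}

/-- The square `S_n = {x ∈ ℤ² : x₁,x₂ ≥ 0, |x|_∞ ≤ ⌊√n - 1⌋}`. -/
def Sn (n : ℕ) : Set Pt :=
  {p | ∃ a b : ℤ, p 0 = (a : ℝ) ∧ p 1 = (b : ℝ) ∧ 0 ≤ a ∧ 0 ≤ b ∧
    max a b ≤ ⌊Real.sqrt (n : ℝ) - 1⌋}

/-- The diamond `D_n = {x ∈ ℤ² : |x|₁ ≤ ⌊(-1 + √(2n-1))/2⌋}`. -/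
def Dn (n : ℕ) : Set Pt :=
  {p | ∃ a b : ℤ, p 0 = (a : ℝ) ∧ p 1 = (b : ℝ) ∧
    |a| + |b| ≤ ⌊((-1) + Real.sqrt (2 * (n : ℝ) - 1)) / 2⌋}

/-- The square `S_{k²} = {x ∈ ℤ² : x₁,x₂ ≥ 0, |x|_∞ ≤ k - 1}` with `k²` lattice points. -/
def SqK (k : ℕ) : Set Pt :=
  {p | ∃ a b : ℤ, p 0 = (a : ℝ) ∧ p 1 = (b : ℝ) ∧ 0 ≤ a ∧ 0 ≤ b ∧
    max a b ≤ (k : ℤ) - 1}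

/-- `β(n) = 2n - 2√n`. -/
def beta (n : ℕ) : ℝ := 2 * (n : ℝ) - 2 * Real.sqrt (n : ℝ)

end

/-!
Everything rests on one competitor argument: in an optimal configuration, two atoms of equal
charge are farther apart than `d = 2 r₀ sin (π / 5)`. Otherwise, moving one of them far away
removes a repulsion `V_r > 6` (assumption [vi]) and at most six attractions, each of strength at
most `1`: by an angular pigeonhole argument and the law of cosines, seven points at mutual distance
`≥ 1` do not fit in the annulus `1 ≤ |x| ≤ r₀ < (2 sin (π / 7))⁻¹`.

Since `r₀ ≤ d`, bonded atoms have opposite charges. Two neighbours of `x_i` seen from `x_i` under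
an angle at most `2π / 5` are at distance at most `d` by the law of cosines, and two of the three
charges involved agree; so bond angles exceed `2π / 5`, and five neighbours are excluded by the
pigeonhole principle again.
-/

open Finset EuclideanGeometry

lemma cos_two_pi_div_five_le_half : cos (2 * π / 5) ≤ 1 / 2 := by
  rw [← cos_pi_div_three]
  exact cos_le_cos_of_nonneg_of_le_pi (by positivity) (by linarith [pi_pos]) (by linarith [pi_pos])

lemma half_le_sin_pi_div_five : 1 / 2 ≤ sin (π / 5) := by
  rw [← sin_pi_div_six]
  exact sin_le_sin_of_le_of_le_pi_div_two (by linarith [pi_pos]) (by linarith [pi_pos])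
    (by linarith [pi_pos])

lemma one_sub_cos_two_mul (x : ℝ) : 1 - cos (2 * x) = 2 * sin x ^ 2 := by
  rw [cos_two_mul, cos_sq']; ring

/-- Since `sin (3π/7) - sin (π/7) = 2 sin (π/7) cos (2π/7)`, this is `sin (3π/7) ≥ 1/2 + sin (π/7)`,
which follows from `sin (3π/7) = cos (π/14)` and the Taylor bounds for `cos` and `sin`. -/
lemma one_le_four_mul_sin_pi_div_seven_mul_cos : 1 ≤ 4 * sin (π / 7) * cos (2 * π / 7) := by
  have h3 : sin (3 * (π / 7)) = 2 * sin (π / 7) * cos (2 * π / 7) + sin (π / 7) := by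
    rw [show 3 * (π / 7) = 2 * (π / 7) + π / 7 by ring, sin_add, sin_two_mul,
      show 2 * π / 7 = 2 * (π / 7) by ring, cos_two_mul]
    ring
  have h4 : sin (3 * (π / 7)) = cos (π / 14) := by
    rw [← sin_pi_div_two_sub]; ring_nf
  have h5 : 1 - (π / 14) ^ 2 / 2 ≤ cos (π / 14) := one_sub_sq_div_two_le_cos
  have h6 : sin (π / 7) ≤ π / 7 := sin_le (by positivity)
  nlinarith [pi_lt_d2, pi_gt_three]

lemma cos_le_cos_of_abs_le {x δ : ℝ} (hx : |x| ≤ δ) (hδ : δ ≤ π) : cos δ ≤ cos x := by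
  rw [← cos_abs x]
  exact cos_le_cos_of_nonneg_of_le_pi (abs_nonneg x) hδ hx

lemma exists_cos_two_pi_div_card_le_cos_sub {ι : Type*} (s : Finset ι) (θ : ι → ℝ)
    (hs : 2 ≤ #s) (hθ : ∀ i ∈ s, ∀ j ∈ s, θ i - θ j < 2 * π) :
    ∃ i ∈ s, ∃ j ∈ s, i ≠ j ∧ cos (2 * π / #s) ≤ cos (θ i - θ j) := by
  set m := #s
  set δ := 2 * π / m
  have hm : (2 : ℝ) ≤ m := by exact_mod_cast hs
  have hδ : 0 < δ := by positivity
  have hδπ : δ ≤ π := by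
    rw [div_le_iff₀ (by positivity)]; nlinarith [pi_pos]
  have hmδ : m * δ = 2 * π := by simp only [δ]; field_simp
  obtain ⟨i₀, hi₀, hmin⟩ := s.exists_min_image θ (card_pos.1 (by omega))
  -- the sector of width `δ`, counted from the smallest angle, that contains `θ i`
  set sector : ι → ℕ := fun i => ⌊(θ i - θ i₀) / δ⌋₊
  have hpos : ∀ i ∈ s, 0 ≤ (θ i - θ i₀) / δ := fun i hi =>
    div_nonneg (by linarith [hmin i hi]) hδ.le
  by_cases hlast : ∃ i ∈ s, sector i = m - 1
  · obtain ⟨i, hi, hsec⟩ := hlast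
    have hfar : (m - 1 : ℝ) ≤ (θ i - θ i₀) / δ := by
      have := Nat.floor_le (hpos i hi)
      rwa [show ⌊(θ i - θ i₀) / δ⌋₊ = m - 1 from hsec, Nat.cast_sub (by omega),
        Nat.cast_one] at this
    rw [le_div_iff₀ hδ, sub_mul, hmδ, one_mul] at hfar
    refine ⟨i, hi, i₀, hi₀, fun h => ?_, ?_⟩
    · subst h; simp [sector] at hsec; omega
    · rw [← cos_two_pi_sub (θ i - θ i₀)]
      exact cos_le_cos_of_abs_le (abs_le.2 ⟨by linarith [hθ i hi i₀ hi₀], by linarith⟩) hδπ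
  · push Not at hlast
    have hmaps : ∀ i ∈ s, sector i ∈ range (m - 1) := by
      intro i hi
      have hlt : sector i < m := by
        rw [Nat.floor_lt (hpos i hi), div_lt_iff₀ hδ, hmδ]
        linarith [hθ i hi i₀ hi₀]
      exact mem_range.2 (by have := hlast i hi; omega)
    obtain ⟨i, hi, j, hj, hij, hsec⟩ :=
      exists_ne_map_eq_of_card_lt_of_maps_to (by simp only [card_range]; omega) hmaps
    have hclose := Int.abs_sub_lt_one_of_floor_eq_floor
        (a := (θ i - θ i₀) / δ) (b := (θ j - θ i₀) / δ) (by
      rw [← Int.natCast_floor_eq_floor (hpos i hi), ← Int.natCast_floor_eq_floor (hpos j hj)]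
      exact congrArg Nat.cast hsec)
    rw [← sub_div, sub_sub_sub_cancel_right, abs_div, abs_of_pos hδ, div_lt_one hδ] at hclose
    exact ⟨i, hi, j, hj, hij, cos_le_cos_of_abs_le hclose.le hδπ⟩

lemma cos_angle_eq_cos_arg_sub_arg {x y : ℂ} (hx : x ≠ 0) (hy : y ≠ 0) :
    cos (InnerProductGeometry.angle x y) = cos (x.arg - y.arg) := by
  rw [Complex.angle_eq_abs_arg hx hy, cos_abs, ← Real.Angle.cos_coe,
    Complex.arg_div_coe_angle hx hy, ← Real.Angle.coe_sub, Real.Angle.cos_coe]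

lemma exists_angle_le_two_pi_div_card {ι : Type*} (s : Finset ι) (p : ι → Pt) (c : Pt)
    (hs : 2 ≤ #s) (hc : ∀ i ∈ s, p i ≠ c) :
    ∃ i ∈ s, ∃ j ∈ s, i ≠ j ∧ ∠ (p i) c (p j) ≤ 2 * π / #s := by
  set z : ι → ℂ := fun i => Complex.orthonormalBasisOneI.repr.symm (p i -ᵥ c)
  have hz : ∀ i ∈ s, z i ≠ 0 := fun i hi =>
    (map_ne_zero_iff _ (LinearIsometryEquiv.injective _)).2 (vsub_ne_zero.2 (hc i hi))
  obtain ⟨i, hi, j, hj, hij, hcos⟩ := exists_cos_two_pi_div_card_le_cos_sub s (fun i => (z i).arg)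
    hs fun i _ j _ => by linarith [Complex.arg_le_pi (z i), Complex.neg_pi_lt_arg (z j)]
  refine ⟨i, hi, j, hj, hij, not_lt.1 fun hlt => hcos.not_gt ?_⟩
  have hangle : ∠ (p i) c (p j) = InnerProductGeometry.angle (z i) (z j) :=
    (LinearIsometry.angle_map Complex.orthonormalBasisOneI.repr.symm.toLinearIsometry _ _).symm
  rw [← cos_angle_eq_cos_arg_sub_arg (hz i hi) (hz j hj), ← hangle]
  exact cos_lt_cos_of_nonneg_of_le_pi (by positivity) (angle_le_pi _ _ _) hlt

lemma card_lt_of_two_pi_div_lt_angle {ι : Type*} (s : Finset ι) (p : ι → Pt) (c : Pt) {m : ℕ}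
    (hm : 2 ≤ m) (hc : ∀ i ∈ s, p i ≠ c)
    (hangle : ∀ i ∈ s, ∀ j ∈ s, i ≠ j → 2 * π / m < ∠ (p i) c (p j)) : #s < m := by
  by_contra! hsm
  obtain ⟨i, hi, j, hj, hij, hle⟩ := exists_angle_le_two_pi_div_card s p c (hm.trans hsm) hc
  have : 2 * π / #s ≤ 2 * π / m :=
    div_le_div_of_nonneg_left (by positivity) (by positivity) (by exact_mod_cast hsm)
  linarith [hangle i hi j hj hij]

lemma sq_add_mul_le_max_of_mem_Icc {lo hi a k : ℝ} (h₁ : lo ≤ a) (h₂ : a ≤ hi) :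
    a ^ 2 + k * a ≤ max (lo ^ 2 + k * lo) (hi ^ 2 + k * hi) := by
  rcases le_total 0 (lo + hi + k) with h | h
  · exact le_max_of_le_right (by nlinarith)
  · exact le_max_of_le_left (by nlinarith)

/-- The law-of-cosines expression is convex in each side length, hence bounded by its values at
the corners of the square `[1, r]²`. -/
lemma sq_add_sq_sub_le_max_corners {a b r c : ℝ} (ha : a ∈ Set.Icc 1 r) (hb : b ∈ Set.Icc 1 r) :
    a ^ 2 + b ^ 2 - 2 * a * b * c ≤
      max (2 - 2 * c) (max (1 + r ^ 2 - 2 * r * c) (2 * r ^ 2 - 2 * r ^ 2 * c)) := by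
  have hA := sq_add_mul_le_max_of_mem_Icc (k := -2 * b * c) ha.1 ha.2
  have hB₁ := sq_add_mul_le_max_of_mem_Icc (k := -2 * c) hb.1 hb.2
  have hBr := sq_add_mul_le_max_of_mem_Icc (k := -2 * r * c) hb.1 hb.2
  rcases le_max_iff.1 hA with h | h
  · rcases le_max_iff.1 hB₁ with h' | h'
    · exact le_max_of_le_left (by linarith)
    · exact le_max_of_le_right (le_max_of_le_left (by linarith))
  · rcases le_max_iff.1 hBr with h' | h'
    · exact le_max_of_le_right (le_max_of_le_left (by linarith))
    · exact le_max_of_le_right (le_max_of_le_right (by linarith))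

lemma dist_sq_le_of_cos_le_cos_angle {y c z : Pt} {r γ : ℝ} (hy : dist y c ∈ Set.Icc 1 r)
    (hz : dist z c ∈ Set.Icc 1 r) (hγ : γ ≤ cos (∠ y c z)) :
    dist y z ^ 2 ≤ max (2 - 2 * γ) (max (1 + r ^ 2 - 2 * r * γ) (2 * r ^ 2 - 2 * r ^ 2 * γ)) := by
  have hpos : 0 ≤ dist y c * dist z c := by positivity
  calc dist y z ^ 2
      = dist y c ^ 2 + dist z c ^ 2 - 2 * dist y c * dist z c * cos (∠ y c z) := by
        rw [sq, law_cos y c z]; ring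
    _ ≤ dist y c ^ 2 + dist z c ^ 2 - 2 * dist y c * dist z c * γ := by nlinarith
    _ ≤ _ := sq_add_sq_sub_le_max_corners hy hz

lemma dist_le_of_angle_le_two_pi_div_five {y c z : Pt} {r : ℝ} (hy : dist y c ∈ Set.Icc 1 r)
    (hz : dist z c ∈ Set.Icc 1 r) (hθ : ∠ y c z ≤ 2 * π / 5) :
    dist y z ≤ 2 * r * sin (π / 5) := by
  have hr : 1 ≤ r := hy.1.trans hy.2
  have hγ₁ := cos_two_pi_div_five_le_half
  have hbound := dist_sq_le_of_cos_le_cos_angle hy hz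
    (cos_le_cos_of_nonneg_of_le_pi (angle_nonneg y c z) (by linarith [pi_pos]) hθ)
  have hsin : (2 * r * sin (π / 5)) ^ 2 = 2 * r ^ 2 - 2 * r ^ 2 * cos (2 * π / 5) := by
    have := one_sub_cos_two_mul (π / 5)
    rw [show 2 * (π / 5) = 2 * π / 5 by ring] at this
    linear_combination (-2 * r ^ 2) * this
  have hcorner : max (2 - 2 * cos (2 * π / 5)) (max (1 + r ^ 2 - 2 * r * cos (2 * π / 5))
      (2 * r ^ 2 - 2 * r ^ 2 * cos (2 * π / 5))) ≤ (2 * r * sin (π / 5)) ^ 2 := by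
    rw [hsin]
    refine max_le (by nlinarith [mul_nonneg (by nlinarith : 0 ≤ r ^ 2 - 1) (by linarith :
      0 ≤ 1 - cos (2 * π / 5))]) (max_le ?_ le_rfl)
    nlinarith [mul_nonneg (sub_nonneg.2 hr) (by nlinarith : 0 ≤ r + 1 - 2 * r * cos (2 * π / 5))]
  exact abs_le_of_sq_le_sq' (hbound.trans hcorner) (by nlinarith [half_le_sin_pi_div_five]) |>.2

lemma dist_lt_one_of_angle_le_two_pi_div_seven {y c z : Pt} {r : ℝ}
    (hr : r < (2 * sin (π / 7))⁻¹) (hy : dist y c ∈ Set.Icc 1 r) (hz : dist z c ∈ Set.Icc 1 r)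
    (hθ : ∠ y c z ≤ 2 * π / 7) : dist y z < 1 := by
  have hr₁ : 1 ≤ r := hy.1.trans hy.2
  have hs : 0 < sin (π / 7) := sin_pos_of_pos_of_lt_pi (by positivity) (by linarith [pi_pos])
  have hrs : 2 * r * sin (π / 7) < 1 := by
    have h2s : 0 < 2 * sin (π / 7) := by positivity
    have := mul_lt_mul_of_pos_left hr h2s
    rw [mul_inv_cancel₀ h2s.ne'] at this
    linarith
  have hbound := dist_sq_le_of_cos_le_cos_angle hy hz
    (cos_le_cos_of_nonneg_of_le_pi (angle_nonneg y c z) (by linarith [pi_pos]) hθ)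
  have hcos : 1 - cos (2 * π / 7) = 2 * sin (π / 7) ^ 2 := by
    rw [← one_sub_cos_two_mul, show 2 * (π / 7) = 2 * π / 7 by ring]
  have h4sc := one_le_four_mul_sin_pi_div_seven_mul_cos
  have hcorner : max (2 - 2 * cos (2 * π / 7)) (max (1 + r ^ 2 - 2 * r * cos (2 * π / 7))
      (2 * r ^ 2 - 2 * r ^ 2 * cos (2 * π / 7))) < 1 := by
    have hrs₀ : 0 ≤ 2 * r * sin (π / 7) := by positivity
    have hsq : (2 * r * sin (π / 7)) ^ 2 < 1 := by nlinarith
    refine max_lt (by nlinarith) (max_lt (by nlinarith) ?_)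
    linear_combination (2 * r ^ 2) * hcos + hsq
  nlinarith [dist_nonneg (x := y) (y := z)]

lemma EReal.coe_finset_sum {ι : Type*} (s : Finset ι) (f : ι → ℝ) :
    ((∑ i ∈ s, f i : ℝ) : EReal) = ∑ i ∈ s, (f i : EReal) :=
  map_sum (⟨⟨((↑) : ℝ → EReal), EReal.coe_zero⟩, EReal.coe_add⟩ : ℝ →+ EReal) f s

lemma EReal.finset_sum_ne_bot {ι : Type*} {s : Finset ι} {f : ι → EReal}
    (hf : ∀ i ∈ s, f i ≠ ⊥) : ∑ i ∈ s, f i ≠ ⊥ :=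
  Finset.sum_induction f (· ≠ ⊥) (fun _ _ ha hb => EReal.add_ne_bot_iff.2 ⟨ha, hb⟩)
    (EReal.coe_ne_bot 0) hf

lemma EReal.finset_sum_eq_top {ι : Type*} [DecidableEq ι] {s : Finset ι} {f : ι → EReal}
    (hf : ∀ i ∈ s, f i ≠ ⊥) {i : ι} (hi : i ∈ s) (htop : f i = ⊤) : ∑ i ∈ s, f i = ⊤ := by
  rw [← add_sum_erase s f hi, htop]
  exact EReal.top_add_of_ne_bot (EReal.finset_sum_ne_bot fun k hk => hf k (mem_of_mem_erase hk))

lemma EReal.half_mul_ne_bot {x : EReal} (hx : x ≠ ⊥) : ((1 / 2 : ℝ) : EReal) * x ≠ ⊥ :=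
  (EReal.mul_ne_bot _ _).2 ⟨Or.inl (EReal.coe_ne_bot _), Or.inr hx, Or.inl (EReal.coe_ne_top _),
    Or.inl (by norm_num)⟩

lemma exists_forall_le_dist {E ι : Type*} [NormedAddCommGroup E] [NormedSpace ℝ E] [Nontrivial E]
    [Fintype ι] (x : ι → E) (R : ℝ) : ∃ p : E, ∀ k, R ≤ dist p (x k) := by
  obtain ⟨p, hp⟩ := NormedSpace.exists_lt_norm ℝ E (R + ∑ k, ‖x k‖)
  refine ⟨p, fun k => ?_⟩
  have hk : ‖x k‖ ≤ ∑ k, ‖x k‖ := single_le_sum (fun k _ => norm_nonneg (x k)) (mem_univ k)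
  have := norm_sub_norm_le p (x k)
  rw [dist_eq_norm]
  linarith

lemma sum_eq_sum_ite_add {ι R : Type*} [Fintype ι] [DecidableEq ι] [AddCommMonoid R] (g : ι → R)
    (j : ι) : ∑ k, g k = ∑ k, (if k = j then 0 else g k) + g j := by
  rw [Finset.sum_ite, sum_const_zero, zero_add, filter_ne', sum_erase_add _ _ (mem_univ j)]

lemma sum_sum_eq_sum_sum_ite_add_two_mul {ι R : Type*} [Fintype ι] [DecidableEq ι] [CommRing R]
    (f : ι → ι → R) (hf : ∀ i k, f i k = f k i) (j : ι) (hj : f j j = 0) :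
    ∑ i, ∑ k, f i k = ∑ i, ∑ k, (if i = j ∨ k = j then 0 else f i k) + 2 * ∑ k, f j k := by
  have hcol : ∑ i, (if i = j then 0 else f i j) = ∑ k, f j k := by
    calc ∑ i, (if i = j then 0 else f i j) = ∑ i, (if i = j then 0 else f i j) + f j j := by
          rw [hj, add_zero]
      _ = ∑ k, f j k := by
          rw [← sum_eq_sum_ite_add (f · j) j]
          exact sum_congr rfl fun i _ => hf i j
  have hrows : ∑ i, ∑ k, (if i = j ∨ k = j then 0 else f i k) =
      ∑ i, (if i = j then 0 else ∑ k, if k = j then 0 else f i k) := by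
    refine sum_congr rfl fun i _ => ?_
    split_ifs with hi <;> simp [hi]
  calc ∑ i, ∑ k, f i k = ∑ i, (if i = j then 0 else ∑ k, f i k) + ∑ k, f j k :=
        sum_eq_sum_ite_add _ j
    _ = ∑ i, ((if i = j then 0 else ∑ k, if k = j then 0 else f i k) +
          (if i = j then 0 else f i j)) + ∑ k, f j k := by
        congr 1
        refine sum_congr rfl fun i _ => ?_
        split_ifs
        · simp
        · exact sum_eq_sum_ite_add (f i) j
    _ = _ := by rw [sum_add_distrib, hcol, hrows]; ring

lemma Config.charge_eq_or_eq_or_eq {n : ℕ} (C : Config n) (a b c : Fin n) :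
    C.q a = C.q b ∨ C.q a = C.q c ∨ C.q b = C.q c := by
  rcases C.hq a with ha | ha <;> rcases C.hq b with hb | hb <;> rcases C.hq c with hc | hc <;>
    omega

def Config.move {n : ℕ} (C : Config n) (j : Fin n) (p : Pt) : Config n :=
  ⟨Function.update C.x j p, C.q, C.hq⟩

/-- Only meaningful for atoms at distance at least `1`, where both potentials are finite
(`toReal` sends `⊤` to `0`). -/
noncomputable def pairEnergy (Va Vr : ℝ → EReal) {n : ℕ} (C : Config n) (i j : Fin n) : ℝ :=
  if i = j then 0
  else if C.q i = C.q j then (Vr (dist (C.x i) (C.x j))).toReal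
  else (Va (dist (C.x i) (C.x j))).toReal

lemma pairEnergy_self (Va Vr : ℝ → EReal) {n : ℕ} (C : Config n) (i : Fin n) :
    pairEnergy Va Vr C i i = 0 :=
  if_pos rfl

lemma pairEnergy_comm (Va Vr : ℝ → EReal) {n : ℕ} (C : Config n) (i j : Fin n) :
    pairEnergy Va Vr C i j = pairEnergy Va Vr C j i := by
  simp only [pairEnergy, eq_comm (a := i), eq_comm (a := C.q i), dist_comm (C.x i)]

lemma IsOptimal.energy_le {Va Vr : ℝ → EReal} {n : ℕ} {C : Config n} (hC : IsOptimal Va Vr C)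
    {C' : Config n} (hq : netCharge C' = netCharge C) : energy Va Vr C ≤ energy Va Vr C' :=
  hC ▸ sInf_le ⟨C', hq, rfl⟩

lemma degree_bondGraph_le_six {r₀ : ℝ} (hr₀ : r₀ < (2 * sin (π / 7))⁻¹) {n : ℕ} (C : Config n)
    (hsep : Pairwise fun i j => 1 ≤ dist (C.x i) (C.x j)) (j : Fin n)
    [Fintype ((bondGraph r₀ C).neighborSet j)] :
    (bondGraph r₀ C).degree j ≤ 6 := by
  have hmem : ∀ k ∈ (bondGraph r₀ C).neighborFinset j, dist (C.x k) (C.x j) ∈ Set.Icc 1 r₀ := by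
    intro k hk
    rw [SimpleGraph.mem_neighborFinset] at hk
    exact ⟨hsep hk.ne.symm, dist_comm (C.x j) (C.x k) ▸ hk.2⟩
  rw [← SimpleGraph.card_neighborFinset_eq_degree, ← Nat.lt_succ_iff]
  refine card_lt_of_two_pi_div_lt_angle _ C.x (C.x j) (by norm_num)
    (fun k hk => ((SimpleGraph.mem_neighborFinset _ _ _).1 hk).1.symm) fun k hk l hl hkl => ?_
  by_contra! hθ
  exact (dist_lt_one_of_angle_le_two_pi_div_seven hr₀ (hmem k hk) (hmem l hl)
    (by exact_mod_cast hθ)).not_ge (hsep hkl)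

namespace PotentialAssumptions

variable {r₀ : ℝ} {Va Vr : ℝ → EReal} {n : ℕ}

lemma zero_le_vr (h : PotentialAssumptions r₀ Va Vr) (r : ℝ) : 0 ≤ Vr r := by
  rcases lt_or_ge r 1 with hr | hr
  · simp [h.vr_inf r hr]
  · exact h.vr_nonneg r hr

lemma neg_one_le_va (h : PotentialAssumptions r₀ Va Vr) (r : ℝ) : ((-1 : ℝ) : EReal) ≤ Va r := by
  rcases eq_or_ne r 1 with rfl | hr
  · exact h.va_one.ge
  · exact (h.va_gt r hr).le

lemma vr_ne_bot (h : PotentialAssumptions r₀ Va Vr) (r : ℝ) : Vr r ≠ ⊥ :=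
  ne_bot_of_le_ne_bot (by simp) (h.zero_le_vr r)

lemma va_ne_bot (h : PotentialAssumptions r₀ Va Vr) (r : ℝ) : Va r ≠ ⊥ :=
  ne_bot_of_le_ne_bot (EReal.coe_ne_bot _) (h.neg_one_le_va r)

lemma vr_eq_zero_of_le (h : PotentialAssumptions r₀ Va Vr) {r : ℝ} (hr : r₀ + 1 ≤ r) : Vr r = 0 :=
  (h.vr_zero_iff r).2 (sqrt_le_iff.2 ⟨by linarith [h.r₀_lb], by nlinarith [h.r₀_lb]⟩)

lemma va_eq_zero_of_le (h : PotentialAssumptions r₀ Va Vr) {r : ℝ} (hr : r₀ + 1 ≤ r) : Va r = 0 :=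
  h.va_zero r (by linarith)

lemma le_two_mul_mul_sin_pi_div_five (h : PotentialAssumptions r₀ Va Vr) :
    r₀ ≤ 2 * r₀ * sin (π / 5) := by
  nlinarith [h.r₀_lb, half_le_sin_pi_div_five]

lemma energy_eq_top (h : PotentialAssumptions r₀ Va Vr) (C : Config n) {i j : Fin n} (hij : i ≠ j)
    (hd : dist (C.x i) (C.x j) < 1) : energy Va Vr C = ⊤ := by
  classical
  have hrep : ∀ i j, (if i ≠ j ∧ C.q i = C.q j then Vr (dist (C.x i) (C.x j)) else 0) ≠ ⊥ :=
    fun i j => by split_ifs <;> simp [h.vr_ne_bot]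
  have hatt : ∀ i j, (if i ≠ j ∧ C.q i ≠ C.q j then Va (dist (C.x i) (C.x j)) else 0) ≠ ⊥ :=
    fun i j => by split_ifs <;> simp [h.va_ne_bot]
  have hsum_ne_bot : ∀ {f : Fin n → Fin n → EReal}, (∀ i j, f i j ≠ ⊥) → ∑ i, ∑ j, f i j ≠ ⊥ :=
    fun hf => EReal.finset_sum_ne_bot fun i _ => EReal.finset_sum_ne_bot fun j _ => hf i j
  have hsum_top : ∀ {f : Fin n → Fin n → EReal}, (∀ i j, f i j ≠ ⊥) → f i j = ⊤ →
      ∑ i, ∑ j, f i j = ⊤ := fun hf htop =>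
    EReal.finset_sum_eq_top (fun i _ => EReal.finset_sum_ne_bot fun j _ => hf i j) (mem_univ i)
      (EReal.finset_sum_eq_top (fun j _ => hf i j) (mem_univ j) htop)
  unfold energy
  by_cases hq : C.q i = C.q j
  · rw [hsum_top hrep (by rw [if_pos ⟨hij, hq⟩, h.vr_inf _ hd]),
      EReal.coe_mul_top_of_pos (by norm_num)]
    exact EReal.top_add_of_ne_bot (EReal.half_mul_ne_bot (hsum_ne_bot hatt))
  · rw [hsum_top hatt (by rw [if_pos ⟨hij, hq⟩, h.va_inf _ hd]),
      EReal.coe_mul_top_of_pos (by norm_num)]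
    exact EReal.add_top_of_ne_bot (EReal.half_mul_ne_bot (hsum_ne_bot hrep))

lemma energy_eq_coe_sum_pairEnergy (h : PotentialAssumptions r₀ Va Vr) (C : Config n)
    (hsep : Pairwise fun i j => 1 ≤ dist (C.x i) (C.x j)) :
    energy Va Vr C = ((1 / 2 * ∑ i, ∑ j, pairEnergy Va Vr C i j : ℝ) : EReal) := by
  have hrep : ∀ i j, (if i ≠ j ∧ C.q i = C.q j then Vr (dist (C.x i) (C.x j)) else 0) =
      ((if i ≠ j ∧ C.q i = C.q j then (Vr (dist (C.x i) (C.x j))).toReal else 0 : ℝ) : EReal) := by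
    intro i j
    split_ifs with hc
    · exact (EReal.coe_toReal (h.vr_fin _ (hsep hc.1)).ne (h.vr_ne_bot _)).symm
    · rfl
  have hatt : ∀ i j, (if i ≠ j ∧ C.q i ≠ C.q j then Va (dist (C.x i) (C.x j)) else 0) =
      ((if i ≠ j ∧ C.q i ≠ C.q j then (Va (dist (C.x i) (C.x j))).toReal else 0 : ℝ) : EReal) := by
    intro i j
    split_ifs with hc
    · exact (EReal.coe_toReal ((h.va_nonpos _ (hsep hc.1)).trans_lt EReal.zero_lt_top).ne
        (h.va_ne_bot _)).symm
    · rfl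
  unfold energy
  simp only [hrep, hatt, ← EReal.coe_finset_sum, ← EReal.coe_mul, ← EReal.coe_add, ← mul_add,
    ← sum_add_distrib]
  congr 3 with i
  congr 1 with j
  unfold pairEnergy
  by_cases hij : i = j <;> by_cases hq : C.q i = C.q j <;> simp [hij, hq]

lemma pairEnergy_eq_zero_of_le_dist (h : PotentialAssumptions r₀ Va Vr) (C : Config n)
    {i j : Fin n} (hd : r₀ + 1 ≤ dist (C.x i) (C.x j)) : pairEnergy Va Vr C i j = 0 := by
  unfold pairEnergy
  split_ifs <;> simp [h.vr_eq_zero_of_le hd, h.va_eq_zero_of_le hd]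

/-- Atoms placed on a line at mutual distances at least `r₀ + 1` do not interact. -/
lemma exists_config_energy_eq_zero (h : PotentialAssumptions r₀ Va Vr) (C : Config n) :
    ∃ C' : Config n, C'.q = C.q ∧ energy Va Vr C' = 0 := by
  obtain ⟨e, he⟩ := exists_norm_eq Pt zero_le_one
  let C' : Config n := ⟨fun k => ((k : ℝ) * (r₀ + 1)) • e, C.q, C.hq⟩
  have hsep : Pairwise fun i j => r₀ + 1 ≤ dist (C'.x i) (C'.x j) := by
    intro i j hij
    have hij' : (1 : ℝ) ≤ |(i : ℝ) - j| := by
      have : (1 : ℤ) ≤ |(i : ℤ) - j| := Int.one_le_abs (sub_ne_zero.2 (by omega))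
      exact_mod_cast this
    simp only [C', dist_eq_norm, ← sub_smul, norm_smul, he, mul_one, ← sub_mul, norm_mul,
      Real.norm_eq_abs, abs_of_pos (by linarith [h.r₀_lb] : 0 < r₀ + 1)]
    nlinarith [h.r₀_lb]
  refine ⟨C', rfl, ?_⟩
  rw [h.energy_eq_coe_sum_pairEnergy C' fun i j hij => by linarith [h.r₀_lb, hsep hij]]
  have hzero : ∀ i j, pairEnergy Va Vr C' i j = 0 := fun i j => by
    rcases eq_or_ne i j with rfl | hij
    · exact pairEnergy_self Va Vr C' i
    · exact h.pairEnergy_eq_zero_of_le_dist C' (hsep hij)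
  simp [hzero]

lemma pairwise_one_le_dist_of_isOptimal (h : PotentialAssumptions r₀ Va Vr) {C : Config n}
    (hC : IsOptimal Va Vr C) : Pairwise fun i j => 1 ≤ dist (C.x i) (C.x j) := by
  intro i j hij
  by_contra! hd
  obtain ⟨C', hq, hE⟩ := h.exists_config_energy_eq_zero C
  have hle := hC.energy_le (C' := C') (by simp only [netCharge, hq])
  rw [h.energy_eq_top C hij hd, hE] at hle
  exact absurd hle (by simp)

lemma pairEnergy_move_of_far (h : PotentialAssumptions r₀ Va Vr) (C : Config n) {j : Fin n} {p : Pt}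
    (hp : ∀ k, r₀ + 1 ≤ dist p (C.x k)) (i k : Fin n) :
    pairEnergy Va Vr (C.move j p) i k = if i = j ∨ k = j then 0 else pairEnergy Va Vr C i k := by
  have hx : ∀ l, l ≠ j → (C.move j p).x l = C.x l := fun l hl => by simp [Config.move, hl]
  have hxj : (C.move j p).x j = p := by simp [Config.move]
  rcases eq_or_ne i k with rfl | hik
  · simp [pairEnergy_self]
  by_cases hi : i = j
  · subst hi
    rw [if_pos (Or.inl rfl)]
    exact h.pairEnergy_eq_zero_of_le_dist _ (by rw [hxj, hx k hik.symm]; exact hp k)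
  by_cases hk : k = j
  · subst hk
    rw [if_pos (Or.inr rfl)]
    exact h.pairEnergy_eq_zero_of_le_dist _ (by rw [hxj, hx i hi, dist_comm]; exact hp i)
  rw [if_neg (by tauto)]
  simp only [pairEnergy, hx i hi, hx k hk]
  rfl

open Classical in
lemma neg_indicator_adj_le_pairEnergy (h : PotentialAssumptions r₀ Va Vr) (C : Config n)
    (hsep : Pairwise fun i j => 1 ≤ dist (C.x i) (C.x j)) (j k : Fin n) :
    -(if (bondGraph r₀ C).Adj j k then 1 else 0 : ℝ) ≤ pairEnergy Va Vr C j k := by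
  have hind : -(if (bondGraph r₀ C).Adj j k then 1 else 0 : ℝ) ≤ 0 := by split_ifs <;> norm_num
  rcases eq_or_ne j k with rfl | hjk
  · rw [pairEnergy_self]; exact hind
  by_cases hq : C.q j = C.q k
  · rw [pairEnergy, if_neg hjk, if_pos hq]
    exact hind.trans (EReal.toReal_nonneg (h.zero_le_vr _))
  rw [pairEnergy, if_neg hjk, if_neg hq]
  by_cases hadj : (bondGraph r₀ C).Adj j k
  · have := EReal.toReal_le_toReal (h.neg_one_le_va (dist (C.x j) (C.x k))) (EReal.coe_ne_bot _)
      ((h.va_nonpos _ (hsep hjk)).trans_lt EReal.zero_lt_top).ne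
    simpa [hadj] using this
  · have hfar : r₀ < dist (C.x j) (C.x k) := by
      by_contra! hle
      exact hadj ⟨fun hx => by linarith [hsep hjk, dist_eq_zero.2 hx], hle⟩
    simp [h.va_zero _ hfar, hadj]

lemma six_lt_pairEnergy (h : PotentialAssumptions r₀ Va Vr) (C : Config n) {j k : Fin n}
    (hjk : j ≠ k) (hq : C.q j = C.q k) (hd₁ : 1 ≤ dist (C.x j) (C.x k))
    (hd : dist (C.x j) (C.x k) ≤ 2 * r₀ * sin (π / 5)) : 6 < pairEnergy Va Vr C j k := by
  rw [pairEnergy, if_neg hjk, if_pos hq, ← EReal.coe_lt_coe_iff,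
    EReal.coe_toReal (h.vr_fin _ hd₁).ne (h.vr_ne_bot _)]
  exact h.vr_quant.trans_le (h.vr_antitone _ _ hd₁ hd)

open Classical in
lemma pairEnergy_sub_degree_le_sum (h : PotentialAssumptions r₀ Va Vr) (C : Config n)
    (hsep : Pairwise fun i j => 1 ≤ dist (C.x i) (C.x j)) (j k₀ : Fin n) :
    pairEnergy Va Vr C j k₀ - (bondGraph r₀ C).degree j ≤ ∑ k, pairEnergy Va Vr C j k := by
  calc pairEnergy Va Vr C j k₀ - (bondGraph r₀ C).degree j
      = ∑ k, ((if k = k₀ then pairEnergy Va Vr C j k₀ else 0) -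
          if (bondGraph r₀ C).Adj j k then 1 else 0) := by
        rw [sum_sub_distrib, sum_ite_eq', if_pos (mem_univ _), sum_boole,
          ← SimpleGraph.neighborFinset_eq_filter, SimpleGraph.card_neighborFinset_eq_degree]
    _ ≤ ∑ k, pairEnergy Va Vr C j k := by
        refine sum_le_sum fun k _ => ?_
        have hind := h.neg_indicator_adj_le_pairEnergy C hsep j k
        split_ifs at hind ⊢ with hk <;> (try subst hk) <;> linarith

lemma two_mul_mul_sin_pi_div_five_lt_dist (h : PotentialAssumptions r₀ Va Vr) {C : Config n}
    (hC : IsOptimal Va Vr C) {j k : Fin n} (hjk : j ≠ k) (hq : C.q j = C.q k) :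
    2 * r₀ * sin (π / 5) < dist (C.x j) (C.x k) := by
  classical
  by_contra! hd
  have hsep := h.pairwise_one_le_dist_of_isOptimal hC
  obtain ⟨p, hp⟩ := exists_forall_le_dist C.x (r₀ + 1)
  have hsep' : Pairwise fun i l => 1 ≤ dist ((C.move j p).x i) ((C.move j p).x l) := by
    intro i l hil
    simp only [Config.move, Function.update_apply]
    split_ifs with hi hl hl
    · exact absurd (hi.trans hl.symm) hil
    · linarith [hp l, h.r₀_lb]
    · rw [dist_comm]; linarith [hp i, h.r₀_lb]
    · exact hsep hil
  have hle := hC.energy_le (C' := C.move j p) rfl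
  rw [h.energy_eq_coe_sum_pairEnergy C hsep, h.energy_eq_coe_sum_pairEnergy _ hsep',
    EReal.coe_le_coe_iff, sum_sum_eq_sum_sum_ite_add_two_mul _ (pairEnergy_comm Va Vr C) j
      (pairEnergy_self Va Vr C j)] at hle
  simp only [h.pairEnergy_move_of_far C hp] at hle
  have hrow := h.pairEnergy_sub_degree_le_sum C hsep j k
  have hdeg := degree_bondGraph_le_six h.r₀_ub C hsep j
  have hsix := h.six_lt_pairEnergy C hjk hq (hsep hjk) hd
  have : ((bondGraph r₀ C).degree j : ℝ) ≤ 6 := by exact_mod_cast hdeg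
  linarith

lemma two_pi_div_five_lt_angle (h : PotentialAssumptions r₀ Va Vr) {C : Config n}
    (hC : IsOptimal Va Vr C) {i : Fin n} {y z : Pt} (hy : y ∈ nbhd r₀ C i)
    (hz : z ∈ nbhd r₀ C i) (hyz : y ≠ z) : 2 * π / 5 < ∠ y (C.x i) z := by
  by_contra! hθ
  obtain ⟨⟨a, rfl⟩, hya, hyd⟩ := hy
  obtain ⟨⟨b, rfl⟩, hzb, hzd⟩ := hz
  have hai : a ≠ i := fun hai => hya (hai ▸ rfl)
  have hbi : b ≠ i := fun hbi => hzb (hbi ▸ rfl)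
  have hab : a ≠ b := fun hab => hyz (hab ▸ rfl)
  have hd := dist_le_of_angle_le_two_pi_div_five ⟨h.pairwise_one_le_dist_of_isOptimal hC hai, hyd⟩
    ⟨h.pairwise_one_le_dist_of_isOptimal hC hbi, hzd⟩ hθ
  have hr := h.le_two_mul_mul_sin_pi_div_five
  rcases C.charge_eq_or_eq_or_eq a b i with hq | hq | hq
  · exact (h.two_mul_mul_sin_pi_div_five_lt_dist hC hab hq).not_ge hd
  · exact (h.two_mul_mul_sin_pi_div_five_lt_dist hC hai hq).not_ge (hyd.trans hr)
  · exact (h.two_mul_mul_sin_pi_div_five_lt_dist hC hbi hq).not_ge (hzd.trans hr)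

lemma ncard_nbhd_le_four (h : PotentialAssumptions r₀ Va Vr) {C : Config n}
    (hC : IsOptimal Va Vr C) (i : Fin n) : (nbhd r₀ C i).ncard ≤ 4 := by
  have hfin : (nbhd r₀ C i).Finite := (Set.finite_range C.x).subset fun y hy => hy.1
  rw [Set.ncard_eq_toFinset_card _ hfin, ← Nat.lt_succ_iff]
  refine card_lt_of_two_pi_div_lt_angle _ id (C.x i) (by norm_num)
    (fun y hy => (hfin.mem_toFinset.1 hy).2.1) fun y hy z hz hyz => ?_
  exact_mod_cast h.two_pi_div_five_lt_angle hC (hfin.mem_toFinset.1 hy) (hfin.mem_toFinset.1 hz) hyz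

end PotentialAssumptions

/-- Optimal configurations have alternating charge distribution, all bond
angles in `[2π/5, 8π/5]`, and every atom has at most four neighbors. -/
theorem optimal_configuration_elementary_properties (r₀ : ℝ) (Va Vr : ℝ → EReal)
    (h : PotentialAssumptions r₀ Va Vr) (n : ℕ) (C : Config n)
    (hC : IsOptimal Va Vr C) :
    AlternatingCharges r₀ C ∧
    (∀ i : Fin n, ∀ y z : Pt, y ∈ nbhd r₀ C i → z ∈ nbhd r₀ C i → y ≠ z →
      2 * Real.pi / 5 ≤ EuclideanGeometry.angle y (C.x i) z ∧
      EuclideanGeometry.angle y (C.x i) z ≤ 8 * Real.pi / 5) ∧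
    (∀ i : Fin n, (nbhd r₀ C i).ncard ≤ 4) := by
  refine ⟨fun i j hadj hq => ?_, fun i y z hy hz hyz => ⟨?_, ?_⟩, h.ncard_nbhd_le_four hC⟩
  · exact (h.two_mul_mul_sin_pi_div_five_lt_dist hC hadj.ne hq).not_ge
      (hadj.2.trans h.le_two_mul_mul_sin_pi_div_five)
  · exact (h.two_pi_div_five_lt_angle hC hy hz hyz).le
  · linarith [angle_le_pi y (C.x i) z, pi_pos]
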